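/- Let A be a unital C*-algebra, a, c ∈ A with Im a > 0, Im c > 0. Set r = ‖(Im a)^{-1/2}(a − c)(Im c)^{-1/2}‖. Then every d in the set B(c, 2r) = { d ∈ A : Im d > 0, ‖(Im d)^{-1/2}(d − c)(Im c)^{-1/2}‖ ≤ 2r } satisfies Im d ≥ (2 + 4r²)⁻¹ Im c. -/

import Mathlib

/-- The imaginary part `(x - x*)/(2i)`. -/
noncomputable def cstarIm {A : Type*} [CStarAlgebra A] (x : A) : A :=
  ((2 * Complex.I)⁻¹ : ℂ) • (x - star x)

/-- `x > 0`: positive and invertible. -/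
def posInv {A : Type*} [CStarAlgebra A] [PartialOrder A] (x : A) : Prop :=
  0 ≤ x ∧ IsUnit x

/-- `x^{-1/2}`, via the continuous functional calculus square root. -/
noncomputable def invSqrt {A : Type*} [CStarAlgebra A] [PartialOrder A] [StarOrderedRing A]
    (x : A) : A :=
  Ring.inverse (CFC.sqrt x)

/-! With `e = Im c`, `f = Im d`, `y = f^{-1/2}(d - c)` and `t = ‖y e^{-1/2}‖ ≤ 2r`, the
C*-identity gives `y* y ≤ t² e`. Expanding `w* w ≥ 0` for `w = y + i s f^{1/2}` gives
`0 ≤ y* y + 2s (f - e) + s² f`, since `Im (d - c) = f - e`; the choice `s = 2 + t²` turns this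
into `e ≤ (2 + t²) f`. -/

open scoped Ring

section

variable {A : Type*} [CStarAlgebra A]

lemma cstarIm_sub (x y : A) : cstarIm (x - y) = cstarIm x - cstarIm y := by
  simp only [cstarIm, star_sub, smul_sub]
  abel

lemma two_I_smul_cstarIm (x : A) : (2 * Complex.I) • cstarIm x = x - star x := by
  rw [cstarIm, smul_smul, mul_inv_cancel₀ (by simp), one_smul]

lemma star_mul_self_ringInverse_mul_add_I_smul {q : A} (hq : IsSelfAdjoint q) (hu : IsUnit q)
    (x : A) (s : ℝ) :
    star (q⁻¹ʳ * x + (s * Complex.I) • q) * (q⁻¹ʳ * x + (s * Complex.I) • q) =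
      star (q⁻¹ʳ * x) * (q⁻¹ʳ * x) + (2 * s) • cstarIm x + s ^ 2 • (q * q) := by
  have hstar : star (q⁻¹ʳ * x) * q = star x := by
    rw [star_mul, hq.ringInverse.star_eq, mul_assoc, Ring.inverse_mul_cancel q hu, mul_one]
  have hinv : q * (q⁻¹ʳ * x) = x := by
    rw [← mul_assoc, Ring.mul_inverse_cancel q hu, one_mul]
  have hcross : (s * Complex.I) • star x - (s * Complex.I) • x = (2 * s) • cstarIm x := by
    rw [← smul_sub, ← neg_sub, smul_neg, ← two_I_smul_cstarIm, smul_smul, ← neg_smul,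
      ← Complex.coe_smul]
    congr 1
    push_cast
    ring_nf
    simp
  have hconj : star ((s : ℂ) * Complex.I) = -(s * Complex.I) := by
    simp [Complex.conj_ofReal]
  have hsq : -((s : ℂ) * Complex.I) * (s * Complex.I) = ((s ^ 2 : ℝ) : ℂ) := by
    push_cast
    ring_nf
    simp
  rw [star_add, star_smul, hq.star_eq, add_mul, mul_add, mul_add, mul_smul_comm, hstar,
    smul_mul_assoc, hinv, smul_mul_smul_comm, hconj, hsq, Complex.coe_smul, ← hcross, neg_smul]
  abel

variable [PartialOrder A] [StarOrderedRing A]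

lemma star_mul_self_le_norm_mul_ringInverse_sq_smul {y p : A} (hp : IsUnit p) :
    star y * y ≤ ‖y * p⁻¹ʳ‖ ^ 2 • (star p * p) := by
  set g := y * p⁻¹ʳ
  have hy : y = g * p := by rw [mul_assoc, Ring.inverse_mul_cancel p hp, mul_one]
  calc star y * y = star p * (star g * g) * p := by rw [hy, star_mul]; noncomm_ring
    _ ≤ ‖star g * g‖ • (star p * p) :=
      CStarAlgebra.star_left_conjugate_le_norm_smul (.star_mul_self g)
    _ = ‖g‖ ^ 2 • (star p * p) := by rw [CStarRing.norm_star_mul_self, sq]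

theorem inv_two_add_sq_smul_cstarIm_le {c d : A} (hc : posInv (cstarIm c))
    (hd : posInv (cstarIm d)) :
    (2 + ‖invSqrt (cstarIm d) * (d - c) * invSqrt (cstarIm c)‖ ^ 2)⁻¹ • cstarIm c ≤
      cstarIm d := by
  set t := ‖invSqrt (cstarIm d) * (d - c) * invSqrt (cstarIm c)‖
  set e := cstarIm c
  set f := cstarIm d
  set p := CFC.sqrt e
  set q := CFC.sqrt f
  set y := q⁻¹ʳ * (d - c)
  have hq : IsSelfAdjoint q := .of_nonneg (CFC.sqrt_nonneg f)
  have hqu : IsUnit q := (CFC.isUnit_sqrt_iff f hd.1).2 hd.2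
  have hpu : IsUnit p := (CFC.isUnit_sqrt_iff e hc.1).2 hc.2
  have hpp : star p * p = e := by
    rw [(IsSelfAdjoint.of_nonneg (CFC.sqrt_nonneg e)).star_eq, CFC.sqrt_mul_sqrt_self e hc.1]
  have hy : star y * y ≤ t ^ 2 • e := by
    have h := star_mul_self_le_norm_mul_ringInverse_sq_smul (y := y) hpu
    rwa [hpp] at h
  have hw := star_mul_self_nonneg (y + ((2 + t ^ 2 : ℝ) * Complex.I) • q)
  rw [star_mul_self_ringInverse_mul_add_I_smul hq hqu, cstarIm_sub,
    CFC.sqrt_mul_sqrt_self f hd.1] at hw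
  have key : 0 ≤ (4 + t ^ 2) • ((2 + t ^ 2) • f - e) := by
    calc 0 ≤ star y * y + (2 * (2 + t ^ 2)) • (f - e) + (2 + t ^ 2) ^ 2 • f := hw
      _ ≤ t ^ 2 • e + (2 * (2 + t ^ 2)) • (f - e) + (2 + t ^ 2) ^ 2 • f := by gcongr
      _ = (4 + t ^ 2) • ((2 + t ^ 2) • f - e) := by module
  have he : e ≤ (2 + t ^ 2) • f :=
    sub_nonneg.1 ((smul_nonneg_iff_nonneg_of_pos_left (by positivity)).1 key)
  exact (inv_smul_le_iff_of_pos (by positivity)).2 he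

end

theorem stmt_19_general {A : Type*} [CStarAlgebra A] [PartialOrder A] [StarOrderedRing A]
    (c : A) (hc : posInv (cstarIm c))
    (r : ℝ)
    (d : A) (hd : posInv (cstarIm d))
    (hball : ‖invSqrt (cstarIm d) * (d - c) * invSqrt (cstarIm c)‖ ≤ 2 * r) :
    ((2 + 4 * r ^ 2)⁻¹ : ℝ) • cstarIm c ≤ cstarIm d := by
  set t := ‖invSqrt (cstarIm d) * (d - c) * invSqrt (cstarIm c)‖
  have ht : t ^ 2 ≤ 4 * r ^ 2 := by
    have ht0 : 0 ≤ t := norm_nonneg _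
    nlinarith
  calc ((2 + 4 * r ^ 2)⁻¹ : ℝ) • cstarIm c ≤ (2 + t ^ 2)⁻¹ • cstarIm c :=
        smul_le_smul_of_nonneg_right (inv_anti₀ (by positivity) (by linarith)) hc.1
    _ ≤ cstarIm d := inv_two_add_sq_smul_cstarIm_le hc hd

theorem stmt_19 {A : Type*} [CStarAlgebra A] [PartialOrder A] [StarOrderedRing A]
    (a c : A) (ha : posInv (cstarIm a)) (hc : posInv (cstarIm c))
    (r : ℝ) (hr : r = ‖invSqrt (cstarIm a) * (a - c) * invSqrt (cstarIm c)‖)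
    (d : A) (hd : posInv (cstarIm d))
    (hball : ‖invSqrt (cstarIm d) * (d - c) * invSqrt (cstarIm c)‖ ≤ 2 * r) :
    ((2 + 4 * r ^ 2)⁻¹ : ℝ) • cstarIm c ≤ cstarIm d :=
  stmt_19_general c hc r d hd hball
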